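/- Let α ∈ (0,1/2) and define R_α = {(m₁, m₂) ∈ ℝ² : m₁·m₂ < 0 and min(|m₁|, |m₂|) ≥ Φ⁻¹(1−α)}. Suppose R ⊆ ℝ² is a rejection region that is monotonic, meaning: if (m₁, m₂) ∈ R and (m₁', m₂') satisfies sign(m₁') = sign(m₁), sign(m₂') = sign(m₂), |m₁'| ≥ |m₁|, |m₂'| ≥ |m₂|, then (m₁', m₂') ∈ R. Suppose further that R is valid for independent standard normal noise: for all (μ₁, μ₂) with μ₁μ₂ ≥ 0, P((μ₁+X₁, μ₂+X₂) ∈ R) ≤ α, where X₁, X₂ are independent standard normals. Then R ∩ {(m₁,m₂) : m₁·m₂ < 0} ⊆ R_α. -/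
import Mathlib


open MeasureTheory ProbabilityTheory Filter Topology

/-- The standard normal distribution on ℝ. -/
noncomputable def stdGauss : Measure ℝ := gaussianReal 0 1

/-- Φ, the standard normal CDF. -/
noncomputable def Φ : ℝ → ℝ := fun x => cdf stdGauss x

/-- The joint law of two independent standard normals. -/
noncomputable def P2 : Measure (ℝ × ℝ) := stdGauss.prod stdGauss


instance : IsProbabilityMeasure stdGauss := by unfold stdGauss; infer_instance

lemma Φ_nonneg (x : ℝ) : 0 ≤ Φ x := cdf_nonneg _ _
lemma Φ_le_one (x : ℝ) : Φ x ≤ 1 := cdf_le_one _ _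

lemma stdGauss_Iic (x : ℝ) : stdGauss (Set.Iic x) = ENNReal.ofReal (Φ x) :=
  (ofReal_cdf stdGauss x).symm

lemma stdGauss_singleton (x : ℝ) : stdGauss {x} = 0 :=
  gaussianReal_absolutelyContinuous 0 one_ne_zero Real.volume_singleton

lemma stdGauss_Iio (x : ℝ) : stdGauss (Set.Iio x) = ENNReal.ofReal (Φ x) := by
  refine le_antisymm ?_ ?_
  · rw [← stdGauss_Iic]; exact measure_mono Set.Iio_subset_Iic_self
  · rw [← stdGauss_Iic]
    calc stdGauss (Set.Iic x) = stdGauss (Set.Iio x ∪ {x}) := by rw [Set.Iio_union_right]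
    _ ≤ stdGauss (Set.Iio x) + stdGauss {x} := measure_union_le _ _
    _ = stdGauss (Set.Iio x) := by rw [stdGauss_singleton, add_zero]

lemma stdGauss_Ici (x : ℝ) : stdGauss (Set.Ici x) = ENNReal.ofReal (1 - Φ x) := by
  have : Set.Ici x = (Set.Iio x)ᶜ := Set.compl_Iio.symm
  rw [this, measure_compl measurableSet_Iio (measure_ne_top _ _), stdGauss_Iio,
    measure_univ, ENNReal.ofReal_sub 1 (Φ_nonneg x), ENNReal.ofReal_one]

lemma Φ_neg (x : ℝ) : Φ (-x) = 1 - Φ x := by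
  have hmap : stdGauss.map (fun y => -1 * y) = stdGauss := by
    show (gaussianReal 0 1).map (fun y => (-1 : ℝ) * y) = gaussianReal 0 1
    rw [gaussianReal_map_const_mul (-1 : ℝ)]
    norm_num
  have hpre : (fun y => (-1 : ℝ) * y) ⁻¹' (Set.Iic (-x)) = Set.Ici x := by
    ext y; simp [neg_le]
  have : stdGauss (Set.Iic (-x)) = stdGauss (Set.Ici x) := by
    conv_lhs => rw [← hmap]
    rw [Measure.map_apply (by fun_prop) measurableSet_Iic, hpre]
  rw [stdGauss_Iic, stdGauss_Ici] at this
  exact (ENNReal.ofReal_eq_ofReal_iff (Φ_nonneg _) (by linarith [Φ_le_one x])).mp this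

lemma Φ_strictMono : StrictMono Φ := by
  intro a b hab
  have hpos : stdGauss (Set.Ioc a b) ≠ 0 := by
    intro h0
    have hv := gaussianReal_absolutelyContinuous' 0 one_ne_zero h0
    rw [Real.volume_Ioc] at hv
    rw [ENNReal.ofReal_eq_zero] at hv
    linarith
  have hsplit : stdGauss (Set.Iic a) + stdGauss (Set.Ioc a b) = stdGauss (Set.Iic b) := by
    rw [← measure_union (Set.Iic_disjoint_Ioc le_rfl) measurableSet_Ioc,
      Set.Iic_union_Ioc_eq_Iic hab.le]
  have hlt : stdGauss (Set.Iic a) < stdGauss (Set.Iic b) := by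
    rw [← hsplit]
    exact ENNReal.lt_add_right (measure_ne_top _ _) hpos
  rw [stdGauss_Iic, stdGauss_Iic] at hlt
  exact (ENNReal.ofReal_lt_ofReal_iff_of_nonneg (Φ_nonneg a)).mp hlt


lemma P2_rect_pm (a b : ℝ) :
    P2 (Set.Ici a ×ˢ Set.Iic b) = ENNReal.ofReal ((1 - Φ a) * Φ b) := by
  rw [P2, Measure.prod_prod, stdGauss_Ici, stdGauss_Iic,
    ← ENNReal.ofReal_mul (by linarith [Φ_le_one a])]

lemma P2_rect_mp (a b : ℝ) :
    P2 (Set.Iic a ×ˢ Set.Ici b) = ENNReal.ofReal (Φ a * (1 - Φ b)) := by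
  rw [P2, Measure.prod_prod, stdGauss_Iic, stdGauss_Ici,
    ← ENNReal.ofReal_mul (Φ_nonneg a)]

lemma tendsto_Φ_sub_nat (x : ℝ) : Tendsto (fun n : ℕ => Φ (x - n)) atTop (𝓝 0) := by
  apply (tendsto_cdf_atBot stdGauss).comp
  simp only [sub_eq_add_neg]
  apply tendsto_atBot_add_const_left
  exact tendsto_neg_atBot_iff.mpr tendsto_natCast_atTop_atTop

lemma tendsto_Φ_add_nat (x : ℝ) : Tendsto (fun n : ℕ => Φ (x + n)) atTop (𝓝 1) := by
  apply (tendsto_cdf_atTop stdGauss).comp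
  apply tendsto_atTop_add_const_left
  exact tendsto_natCast_atTop_atTop

/-- Any monotonic test that is valid at level α for independent standard normal
noise has its rejection region, restricted to the opposite-sign quadrants,
contained in the recommended test's rejection region R_α. -/
theorem stmt9 (α cα : ℝ) (hα : α ∈ Set.Ioo (0:ℝ) (1/2)) (hc : Φ cα = 1 - α)
    (R : Set (ℝ × ℝ))
    (hmono : ∀ m m' : ℝ × ℝ, m ∈ R →
      Real.sign m'.1 = Real.sign m.1 → Real.sign m'.2 = Real.sign m.2 →
      |m.1| ≤ |m'.1| → |m.2| ≤ |m'.2| → m' ∈ R)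
    (hvalid : ∀ μ₁ μ₂ : ℝ, μ₁ * μ₂ ≥ 0 →
      P2 {p : ℝ × ℝ | (μ₁ + p.1, μ₂ + p.2) ∈ R} ≤ ENNReal.ofReal α) :
    R ∩ {m : ℝ × ℝ | m.1 * m.2 < 0}
      ⊆ {m : ℝ × ℝ | m.1 * m.2 < 0 ∧ cα ≤ min |m.1| |m.2|} := by
  rintro ⟨m₁, m₂⟩ ⟨hmR, hmlt⟩
  simp only [Set.mem_setOf_eq] at hmlt ⊢
  refine ⟨hmlt, ?_⟩
  have hα0 : (0:ℝ) < α := hα.1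
  have hΦneg : Φ (-cα) = α := by rw [Φ_neg]; linarith
  rcases mul_neg_iff.mp hmlt with ⟨h1, h2⟩ | ⟨h1, h2⟩
  · -- 0 < m₁, m₂ < 0
    have claimA : Φ m₂ ≤ α := by
      have key : ∀ n : ℕ, (1 - Φ (m₁ - n)) * Φ m₂ ≤ α := by
        intro n
        have hsub : Set.Ici (m₁ - (n:ℝ)) ×ˢ Set.Iic m₂ ⊆
            {p : ℝ × ℝ | ((n:ℝ) + p.1, 0 + p.2) ∈ R} := by
          rintro ⟨x, y⟩ ⟨hx, hy⟩
          simp only [Set.mem_Ici] at hx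
          simp only [Set.mem_Iic] at hy
          have hx1 : m₁ ≤ (n:ℝ) + x := by
            have : (0:ℝ) ≤ n := Nat.cast_nonneg n
            linarith
          have hxpos : (0:ℝ) < (n:ℝ) + x := lt_of_lt_of_le h1 hx1
          have hyneg : y < 0 := lt_of_le_of_lt hy h2
          refine hmono (m₁, m₂) ((n:ℝ) + x, 0 + y) hmR ?_ ?_ ?_ ?_
          · simp only; rw [Real.sign_of_pos hxpos, Real.sign_of_pos h1]
          · simp only [zero_add]; rw [Real.sign_of_neg hyneg, Real.sign_of_neg h2]
          · simp only; rw [abs_of_pos h1, abs_of_pos hxpos]; exact hx1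
          · simp only [zero_add]; rw [abs_of_neg h2, abs_of_neg hyneg]; linarith
        refine (ENNReal.ofReal_le_ofReal_iff hα0.le).mp ?_
        calc ENNReal.ofReal ((1 - Φ (m₁ - n)) * Φ m₂)
            = P2 (Set.Ici (m₁ - (n:ℝ)) ×ˢ Set.Iic m₂) := (P2_rect_pm _ _).symm
          _ ≤ P2 {p : ℝ × ℝ | ((n:ℝ) + p.1, 0 + p.2) ∈ R} := measure_mono hsub
          _ ≤ ENNReal.ofReal α := hvalid (n:ℝ) 0 (by simp)
      have htend : Tendsto (fun n : ℕ => (1 - Φ (m₁ - n)) * Φ m₂) atTop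
          (𝓝 ((1 - 0) * Φ m₂)) :=
        (tendsto_const_nhds.sub (tendsto_Φ_sub_nat m₁)).mul tendsto_const_nhds
      have h := le_of_tendsto htend (Filter.Eventually.of_forall key)
      rw [sub_zero, one_mul] at h
      exact h
    have claimB : 1 - Φ m₁ ≤ α := by
      have key : ∀ n : ℕ, (1 - Φ m₁) * Φ (m₂ + n) ≤ α := by
        intro n
        have hsub : Set.Ici m₁ ×ˢ Set.Iic (m₂ + (n:ℝ)) ⊆
            {p : ℝ × ℝ | (0 + p.1, -(n:ℝ) + p.2) ∈ R} := by
          rintro ⟨x, y⟩ ⟨hx, hy⟩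
          simp only [Set.mem_Ici] at hx
          simp only [Set.mem_Iic] at hy
          have hxpos : (0:ℝ) < x := lt_of_lt_of_le h1 hx
          have hy1 : -(n:ℝ) + y ≤ m₂ := by linarith
          have hyneg : -(n:ℝ) + y < 0 := lt_of_le_of_lt hy1 h2
          refine hmono (m₁, m₂) (0 + x, -(n:ℝ) + y) hmR ?_ ?_ ?_ ?_
          · simp only [zero_add]; rw [Real.sign_of_pos hxpos, Real.sign_of_pos h1]
          · simp only; rw [Real.sign_of_neg hyneg, Real.sign_of_neg h2]
          · simp only [zero_add]; rw [abs_of_pos h1, abs_of_pos hxpos]; exact hx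
          · simp only; rw [abs_of_neg h2, abs_of_neg hyneg]; linarith
        refine (ENNReal.ofReal_le_ofReal_iff hα0.le).mp ?_
        calc ENNReal.ofReal ((1 - Φ m₁) * Φ (m₂ + n))
            = P2 (Set.Ici m₁ ×ˢ Set.Iic (m₂ + (n:ℝ))) := (P2_rect_pm _ _).symm
          _ ≤ P2 {p : ℝ × ℝ | (0 + p.1, -(n:ℝ) + p.2) ∈ R} := measure_mono hsub
          _ ≤ ENNReal.ofReal α := hvalid 0 (-(n:ℝ)) (by simp)
      have htend : Tendsto (fun n : ℕ => (1 - Φ m₁) * Φ (m₂ + n)) atTop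
          (𝓝 ((1 - Φ m₁) * 1)) :=
        tendsto_const_nhds.mul (tendsto_Φ_add_nat m₂)
      have h := le_of_tendsto htend (Filter.Eventually.of_forall key)
      rw [mul_one] at h
      exact h
    have hm2 : m₂ ≤ -cα := by
      rw [← hΦneg] at claimA
      exact Φ_strictMono.le_iff_le.mp claimA
    have hm1 : cα ≤ m₁ := by
      have : Φ cα ≤ Φ m₁ := by rw [hc]; linarith
      exact Φ_strictMono.le_iff_le.mp this
    rw [abs_of_pos h1, abs_of_neg h2]
    exact le_min hm1 (by linarith)
  · -- m₁ < 0, 0 < m₂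
    have claimA : Φ m₁ ≤ α := by
      have key : ∀ n : ℕ, Φ m₁ * (1 - Φ (m₂ - n)) ≤ α := by
        intro n
        have hsub : Set.Iic m₁ ×ˢ Set.Ici (m₂ - (n:ℝ)) ⊆
            {p : ℝ × ℝ | (0 + p.1, (n:ℝ) + p.2) ∈ R} := by
          rintro ⟨x, y⟩ ⟨hx, hy⟩
          simp only [Set.mem_Iic] at hx
          simp only [Set.mem_Ici] at hy
          have hxneg : x < 0 := lt_of_le_of_lt hx h1
          have hy1 : m₂ ≤ (n:ℝ) + y := by linarith
          have hypos : (0:ℝ) < (n:ℝ) + y := lt_of_lt_of_le h2 hy1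
          refine hmono (m₁, m₂) (0 + x, (n:ℝ) + y) hmR ?_ ?_ ?_ ?_
          · simp only [zero_add]; rw [Real.sign_of_neg hxneg, Real.sign_of_neg h1]
          · simp only; rw [Real.sign_of_pos hypos, Real.sign_of_pos h2]
          · simp only [zero_add]; rw [abs_of_neg h1, abs_of_neg hxneg]; linarith
          · simp only; rw [abs_of_pos h2, abs_of_pos hypos]; exact hy1
        refine (ENNReal.ofReal_le_ofReal_iff hα0.le).mp ?_
        calc ENNReal.ofReal (Φ m₁ * (1 - Φ (m₂ - n)))
            = P2 (Set.Iic m₁ ×ˢ Set.Ici (m₂ - (n:ℝ))) := (P2_rect_mp _ _).symm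
          _ ≤ P2 {p : ℝ × ℝ | (0 + p.1, (n:ℝ) + p.2) ∈ R} := measure_mono hsub
          _ ≤ ENNReal.ofReal α := hvalid 0 (n:ℝ) (by simp)
      have htend : Tendsto (fun n : ℕ => Φ m₁ * (1 - Φ (m₂ - n))) atTop
          (𝓝 (Φ m₁ * (1 - 0))) :=
        tendsto_const_nhds.mul (tendsto_const_nhds.sub (tendsto_Φ_sub_nat m₂))
      have h := le_of_tendsto htend (Filter.Eventually.of_forall key)
      rw [sub_zero, mul_one] at h
      exact h
    have claimB : 1 - Φ m₂ ≤ α := by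
      have key : ∀ n : ℕ, Φ (m₁ + n) * (1 - Φ m₂) ≤ α := by
        intro n
        have hsub : Set.Iic (m₁ + (n:ℝ)) ×ˢ Set.Ici m₂ ⊆
            {p : ℝ × ℝ | (-(n:ℝ) + p.1, 0 + p.2) ∈ R} := by
          rintro ⟨x, y⟩ ⟨hx, hy⟩
          simp only [Set.mem_Iic] at hx
          simp only [Set.mem_Ici] at hy
          have hx1 : -(n:ℝ) + x ≤ m₁ := by linarith
          have hxneg : -(n:ℝ) + x < 0 := lt_of_le_of_lt hx1 h1
          have hypos : (0:ℝ) < y := lt_of_lt_of_le h2 hy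
          refine hmono (m₁, m₂) (-(n:ℝ) + x, 0 + y) hmR ?_ ?_ ?_ ?_
          · simp only; rw [Real.sign_of_neg hxneg, Real.sign_of_neg h1]
          · simp only [zero_add]; rw [Real.sign_of_pos hypos, Real.sign_of_pos h2]
          · simp only; rw [abs_of_neg h1, abs_of_neg hxneg]; linarith
          · simp only [zero_add]; rw [abs_of_pos h2, abs_of_pos hypos]; exact hy
        refine (ENNReal.ofReal_le_ofReal_iff hα0.le).mp ?_
        calc ENNReal.ofReal (Φ (m₁ + n) * (1 - Φ m₂))
            = P2 (Set.Iic (m₁ + (n:ℝ)) ×ˢ Set.Ici m₂) := (P2_rect_mp _ _).symm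
          _ ≤ P2 {p : ℝ × ℝ | (-(n:ℝ) + p.1, 0 + p.2) ∈ R} := measure_mono hsub
          _ ≤ ENNReal.ofReal α := hvalid (-(n:ℝ)) 0 (by simp)
      have htend : Tendsto (fun n : ℕ => Φ (m₁ + n) * (1 - Φ m₂)) atTop
          (𝓝 (1 * (1 - Φ m₂))) :=
        (tendsto_Φ_add_nat m₁).mul tendsto_const_nhds
      have h := le_of_tendsto htend (Filter.Eventually.of_forall key)
      rw [one_mul] at h
      exact h
    have hm1 : m₁ ≤ -cα := by
      rw [← hΦneg] at claimA
      exact Φ_strictMono.le_iff_le.mp claimA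
    have hm2 : cα ≤ m₂ := by
      have : Φ cα ≤ Φ m₂ := by rw [hc]; linarith
      exact Φ_strictMono.le_iff_le.mp this
    rw [abs_of_neg h1, abs_of_pos h2]
    exact le_min (by linarith) hm2
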